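/- Let a ≥ 2/π be a real number and define f_a(x) = ((a + √(1 + x²))·arctan x)/x for x > 0. Then f_a is strictly decreasing on (0, ∞). -/

import Mathlib

/-!
Write `t = arctan x` and `s = √(1 + x²)`. The derivative of `f_a` has the sign of
`s (x - t) - a (t s² - x)`, so since `t < x` and `a ≥ 2 / π` it suffices that
`π s (x - t) < 2 (t s² - x)`. Multiplied by `cos² t`, this says `φ t > 0` for
`φ θ = (2 + π cos θ) θ - (π + 2 cos θ) sin θ` on `(0, π / 2)`. Now `φ` vanishes at both ends and
`φ' θ = sin θ (4 sin θ - π θ)`, which changes sign only once, from `+` to `-`, because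
`sin θ / θ` is strictly decreasing; hence `φ` is positive in between.
-/

open Real Set

lemma strictAntiOn_sin_div_self : StrictAntiOn (fun x => sin x / x) (Ioc 0 π) := by
  intro x hx y hy hxy
  simpa using strictConcaveOn_sin_Icc.secant_strict_mono (a := 0) ⟨le_rfl, pi_pos.le⟩
    (Ioc_subset_Icc_self hx) (Ioc_subset_Icc_self hy) hx.1.ne' hy.1.ne' hxy

lemma arctan_lt_self {x : ℝ} (hx : 0 < x) : arctan x < x := by
  simpa using lt_tan (arctan_pos.2 hx) (arctan_lt_pi_div_two x)

lemma pos_of_deriv_pos_left_or_neg_right {φ φ' : ℝ → ℝ} {a b : ℝ}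
    (hφ : ContinuousOn φ (Icc a b)) (hφ' : ∀ x ∈ Ioo a b, HasDerivAt φ (φ' x) x)
    (ha : 0 ≤ φ a) (hb : 0 ≤ φ b)
    (hsign : ∀ θ ∈ Ioo a b, (∀ u ∈ Ioo a θ, 0 < φ' u) ∨ ∀ u ∈ Ioo θ b, φ' u < 0)
    {θ : ℝ} (hθ : θ ∈ Ioo a b) : 0 < φ θ := by
  rcases hsign θ hθ with hleft | hright
  · have hmono : StrictMonoOn φ (Icc a θ) := by
      refine strictMonoOn_of_hasDerivWithinAt_pos (f' := φ') (convex_Icc a θ)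
        (hφ.mono (Icc_subset_Icc_right hθ.2.le)) (fun u hu => ?_) (fun u hu => ?_)
      · rw [interior_Icc] at hu
        exact (hφ' u ⟨hu.1, hu.2.trans hθ.2⟩).hasDerivWithinAt
      · rw [interior_Icc] at hu
        exact hleft u hu
    exact ha.trans_lt (hmono (left_mem_Icc.2 hθ.1.le) (right_mem_Icc.2 hθ.1.le) hθ.1)
  · have hanti : StrictAntiOn φ (Icc θ b) := by
      refine strictAntiOn_of_hasDerivWithinAt_neg (f' := φ') (convex_Icc θ b)
        (hφ.mono (Icc_subset_Icc_left hθ.1.le)) (fun u hu => ?_) (fun u hu => ?_)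
      · rw [interior_Icc] at hu
        exact (hφ' u ⟨hθ.1.trans hu.1, hu.2⟩).hasDerivWithinAt
      · rw [interior_Icc] at hu
        exact hright u hu
    exact hb.trans_lt (hanti (left_mem_Icc.2 hθ.2.le) (right_mem_Icc.2 hθ.2.le) hθ.2)

noncomputable def shaferPhi (θ : ℝ) : ℝ := (2 + π * cos θ) * θ - (π + 2 * cos θ) * sin θ

lemma hasDerivAt_shaferPhi (θ : ℝ) :
    HasDerivAt shaferPhi (sin θ * (4 * sin θ - π * θ)) θ := by
  have h := (((hasDerivAt_cos θ).const_mul π).const_add 2).mul (hasDerivAt_id θ) |>.sub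
    ((((hasDerivAt_cos θ).const_mul 2).const_add π).mul (hasDerivAt_sin θ))
  refine h.congr_deriv ?_
  simp only [id]
  linear_combination (-2) * sin_sq_add_cos_sq θ

lemma shaferPhi_pos {θ : ℝ} (h0 : 0 < θ) (h1 : θ < π / 2) : 0 < shaferPhi θ := by
  refine pos_of_deriv_pos_left_or_neg_right (φ' := fun u => sin u * (4 * sin u - π * u))
    (a := 0) (b := π / 2) (by unfold shaferPhi; fun_prop) (fun u _ => hasDerivAt_shaferPhi u)
    (by simp [shaferPhi]) (by simp [shaferPhi]; linarith) (fun θ hθ => ?_) ⟨h0, h1⟩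
  have hsin_pos : ∀ u ∈ Ioo 0 (π / 2), 0 < sin u := fun u hu =>
    sin_pos_of_pos_of_lt_pi hu.1 (by linarith [hu.2, pi_pos])
  have hmem : ∀ u ∈ Ioo 0 (π / 2), u ∈ Ioc 0 π := fun u hu =>
    ⟨hu.1, by linarith [hu.2, pi_pos]⟩
  -- `4 sin u - π u` has the sign of `sin u / u - π / 4`, which is strictly decreasing
  rcases le_or_gt (π / 4) (sin θ / θ) with hθ' | hθ'
  · left
    intro u hu
    have hu' : u ∈ Ioo 0 (π / 2) := ⟨hu.1, hu.2.trans hθ.2⟩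
    have := strictAntiOn_sin_div_self (hmem u hu') (hmem θ hθ) hu.2
    have : π / 4 < sin u / u := hθ'.trans_lt this
    rw [lt_div_iff₀ hu.1] at this
    exact mul_pos (hsin_pos u hu') (by linarith)
  · right
    intro u hu
    have hu' : u ∈ Ioo 0 (π / 2) := ⟨hθ.1.trans hu.1, hu.2⟩
    have := strictAntiOn_sin_div_self (hmem θ hθ) (hmem u hu') hu.1
    have : sin u / u < π / 4 := this.trans hθ'
    rw [div_lt_iff₀ hu'.1] at this
    exact mul_neg_of_pos_of_neg (hsin_pos u hu') (by linarith)

lemma sqrt_mul_sub_arctan_lt {x : ℝ} (hx : 0 < x) :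
    √(1 + x ^ 2) * (x - arctan x) < 2 / π * (arctan x * (1 + x ^ 2) - x) := by
  have hφ := shaferPhi_pos (arctan_pos.2 hx) (arctan_lt_pi_div_two x)
  rw [shaferPhi, cos_arctan, sin_arctan] at hφ
  have hs : √(1 + x ^ 2) ^ 2 = 1 + x ^ 2 := sq_sqrt (by positivity)
  -- multiply by `1 + x ^ 2 = 1 / cos² (arctan x)`
  have := mul_pos hφ (show 0 < √(1 + x ^ 2) ^ 2 by positivity)
  field_simp at this
  rw [div_mul_eq_mul_div, lt_div_iff₀ pi_pos]
  linear_combination this + 2 * arctan x * hs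

lemma hasDerivAt_shafer (a : ℝ) {x : ℝ} (hx : x ≠ 0) :
    HasDerivAt (fun y => ((a + √(1 + y ^ 2)) * arctan y) / y)
      ((√(1 + x ^ 2) * (x - arctan x) - a * (arctan x * (1 + x ^ 2) - x)) / ((1 + x ^ 2) * x ^ 2))
      x := by
  have hs : √(1 + x ^ 2) ^ 2 = 1 + x ^ 2 := sq_sqrt (by positivity)
  have h := ((((hasDerivAt_pow 2 x).const_add 1).sqrt (by positivity)).const_add a |>.mul
    (hasDerivAt_arctan x)).div (hasDerivAt_id x) hx
  refine h.congr_deriv ?_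
  simp only [id, Pi.mul_apply]
  field_simp
  linear_combination (-2 * x ^ 2 * arctan x) * hs

theorem shafer_f_strictAnti_of_ge (a : ℝ) (ha : a ≥ 2 / Real.pi) :
    StrictAntiOn (fun x : ℝ => ((a + Real.sqrt (1 + x ^ 2)) * Real.arctan x) / x)
      (Set.Ioi (0 : ℝ)) := by
  refine strictAntiOn_of_hasDerivWithinAt_neg (convex_Ioi 0)
    (fun x hx => (hasDerivAt_shafer a (ne_of_gt hx)).continuousAt.continuousWithinAt)
    (fun x hx => (hasDerivAt_shafer a (ne_of_gt (interior_subset hx))).hasDerivWithinAt)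
    (fun x hx => ?_)
  rw [interior_Ioi, mem_Ioi] at hx
  have key := sqrt_mul_sub_arctan_lt hx
  have hgap : 0 < √(1 + x ^ 2) * (x - arctan x) :=
    mul_pos (by positivity) (sub_pos.2 (arctan_lt_self hx))
  have hT : 0 < arctan x * (1 + x ^ 2) - x := pos_of_mul_pos_right (hgap.trans key) (by positivity)
  refine div_neg_of_neg_of_pos (sub_neg.2 ?_) (by positivity)
  exact key.trans_le (mul_le_mul_of_nonneg_right ha hT.le)
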